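/- arXiv:2504.20400 — 7 statements merged into one kernel-verified Lean document; each statement's English description precedes it below -/
import Mathlib

section
/- The function y ↦ ζ(y)/φ(y), where φ(y) = y - 1 - log y and ζ(y) = (y-1)^2/y, extended by the value 2 at y = 1, is nonincreasing on (0,∞). -/
open Real

noncomputable def zetaPhiRatio (y : ℝ) : ℝ :=
  if y = 1 then 2 else ((y - 1) ^ 2 / y) / (y - 1 - Real.log y)

/-!
It suffices that the reciprocal `y φ(y) / (y - 1)²` is nondecreasing. Away from `y = 1` its
derivative is `(y - 1) ((y + 1) log y - 2 (y - 1)) / (y - 1)⁴`, and `(y + 1) log y - 2 (y - 1)` is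
increasing (its derivative is `log y - 1 + 1/y ≥ 0`) and vanishes at `1`, so it has the sign of
`y - 1`. The two branches glue at the value `1/2`, because
`y φ(y) / (y - 1)² - 1/2 = y (y - 1/y - 2 log y) / (2 (y - 1)²)`, where `y - 1/y - 2 log y` is
increasing as well (its derivative is `(1 - 1/y)²`) and vanishes at `1`.
-/

open Set

theorem MonotoneOn.Ioi_of_Ioo_of_Ioi {α β : Type*} [LinearOrder α] [Preorder β] {f : α → β}
    {a b : α} (hab : a < b) (h₁ : MonotoneOn f (Ioo a b)) (h₂ : MonotoneOn f (Ioi b))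
    (hl : ∀ x ∈ Ioo a b, f x ≤ f b) (hr : ∀ x ∈ Ioi b, f b ≤ f x) : MonotoneOn f (Ioi a) := by
  have hIoc : MonotoneOn f (Ioc a b) := by
    rw [← Ioo_insert_right hab]
    exact monotoneOn_insert_iff.2
      ⟨fun x hx _ => hl x hx, fun x hx hbx => absurd hx.2 hbx.not_gt, h₁⟩
  have hIci : MonotoneOn f (Ici b) := by
    rw [← Ioi_insert]
    exact monotoneOn_insert_iff.2
      ⟨fun x hx hxb => absurd hx hxb.not_gt, fun x hx _ => hr x hx, h₂⟩
  rw [← Ioc_union_Ici_eq_Ioi hab]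
  exact hIoc.union_right hIci (isGreatest_Ioc hab) isLeast_Ici

theorem sub_mul_nonneg_of_monotoneOn {α : Type*} [Ring α] [LinearOrder α] [IsStrictOrderedRing α]
    {f : α → α} {s : Set α} {a y : α} (hf : MonotoneOn f s) (ha : a ∈ s) (hfa : f a = 0)
    (hy : y ∈ s) : 0 ≤ (y - a) * f y := by
  rcases le_total y a with hya | hay
  · exact mul_nonneg_of_nonpos_of_nonpos (sub_nonpos.2 hya) (hfa ▸ hf hy ha hya)
  · exact mul_nonneg (sub_nonneg.2 hay) (hfa ▸ hf ha hy hay)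

theorem monotoneOn_of_hasDerivAt_nonneg {D : Set ℝ} (hD : Convex ℝ D) {f f' : ℝ → ℝ}
    (hf : ∀ x ∈ D, HasDerivAt f (f' x) x) (hf' : ∀ x ∈ D, 0 ≤ f' x) : MonotoneOn f D :=
  monotoneOn_of_hasDerivWithinAt_nonneg hD
    (fun x hx => (hf x hx).continuousAt.continuousWithinAt)
    (fun x hx => (hf x (interior_subset hx)).hasDerivWithinAt)
    (fun x hx => hf' x (interior_subset hx))

namespace Real

theorem monotoneOn_sub_inv_sub_two_mul_log :
    MonotoneOn (fun y => y - y⁻¹ - 2 * log y) (Ioi 0) :=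
  monotoneOn_of_hasDerivAt_nonneg (convex_Ioi 0) (f' := fun y => (1 - y⁻¹) ^ 2)
    (fun y hy => (((hasDerivAt_id y).sub (hasDerivAt_inv (ne_of_gt hy))).sub
      ((hasDerivAt_log (ne_of_gt hy)).const_mul 2)).congr_deriv (by field_simp; ring))
    (fun _ _ => sq_nonneg _)

theorem monotoneOn_add_one_mul_log_sub :
    MonotoneOn (fun y => (y + 1) * log y - 2 * (y - 1)) (Ioi 0) :=
  monotoneOn_of_hasDerivAt_nonneg (convex_Ioi 0) (f' := fun y => log y - (1 - y⁻¹))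
    (fun y (hy : 0 < y) => ((((hasDerivAt_id' y).add_const 1).fun_mul
      (hasDerivAt_log (ne_of_gt hy))).fun_sub
      (((hasDerivAt_id' y).sub_const 1).const_mul 2)).congr_deriv (by field_simp; ring))
    (fun _ hy => sub_nonneg.2 (one_sub_inv_le_log_of_pos hy))

end Real

noncomputable def phiZetaRatio (y : ℝ) : ℝ :=
  if y = 1 then 1 / 2 else y * (y - 1 - log y) / (y - 1) ^ 2

theorem zetaPhiRatio_eq_inv (y : ℝ) : zetaPhiRatio y = (phiZetaRatio y)⁻¹ := by
  unfold zetaPhiRatio phiZetaRatio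
  split_ifs
  · norm_num
  · rw [inv_div, div_div]

theorem phiZetaRatio_pos {y : ℝ} (hy : 0 < y) : 0 < phiZetaRatio y := by
  unfold phiZetaRatio
  split_ifs with hy1
  · norm_num
  · have hφ : 0 < y - 1 - log y := sub_pos.2 (log_lt_sub_one_of_pos hy hy1)
    positivity

theorem sub_one_mul_phiZetaRatio_sub_half_nonneg {y : ℝ} (hy : 0 < y) :
    0 ≤ (y - 1) * (phiZetaRatio y - 1 / 2) := by
  unfold phiZetaRatio
  split_ifs with hy1
  · simp [hy1]
  · have hsign : 0 ≤ (y - 1) * (y - y⁻¹ - 2 * log y) := by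
      simpa using sub_mul_nonneg_of_monotoneOn monotoneOn_sub_inv_sub_two_mul_log
        (mem_Ioi.2 one_pos) (by simp) hy
    have hsq : (y - 1) ^ 2 ≠ 0 := pow_ne_zero 2 (sub_ne_zero.2 hy1)
    calc 0 ≤ y * ((y - 1) * (y - y⁻¹ - 2 * log y)) / (2 * (y - 1) ^ 2) :=
          div_nonneg (mul_nonneg hy.le hsign) (by positivity)
      _ = (y - 1) * (y * (y - 1 - log y) / (y - 1) ^ 2 - 1 / 2) := by field_simp; ring

theorem hasDerivAt_phiZetaRatio {y : ℝ} (hy : 0 < y) (hy1 : y ≠ 1) :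
    HasDerivAt phiZetaRatio ((y - 1) * ((y + 1) * log y - 2 * (y - 1)) / (y - 1) ^ 4) y := by
  have hquot : HasDerivAt (fun y => y * (y - 1 - log y) / (y - 1) ^ 2)
      ((y - 1) * ((y + 1) * log y - 2 * (y - 1)) / (y - 1) ^ 4) y := by
    refine (((hasDerivAt_id' y).fun_mul (((hasDerivAt_id' y).sub_const 1).fun_sub
      (hasDerivAt_log (ne_of_gt hy)))).fun_div (((hasDerivAt_id' y).sub_const 1).fun_pow 2)
      (pow_ne_zero 2 (sub_ne_zero.2 hy1))).congr_deriv ?_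
    field_simp
    ring
  refine hquot.congr_of_eventuallyEq ?_
  filter_upwards [eventually_ne_nhds hy1] with x hx
  simp [phiZetaRatio, hx]

theorem monotoneOn_phiZetaRatio_of_convex {s : Set ℝ} (hs : Convex ℝ s) (hs0 : s ⊆ Ioi 0)
    (hs1 : 1 ∉ s) : MonotoneOn phiZetaRatio s := by
  refine monotoneOn_of_hasDerivAt_nonneg hs
    (fun y hy => hasDerivAt_phiZetaRatio (hs0 hy) (ne_of_mem_of_not_mem hy hs1))
    (fun y hy => div_nonneg ?_ ?_)
  · simpa using sub_mul_nonneg_of_monotoneOn monotoneOn_add_one_mul_log_sub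
      (mem_Ioi.2 one_pos) (by simp) (hs0 hy)
  · positivity

theorem monotoneOn_phiZetaRatio : MonotoneOn phiZetaRatio (Ioi 0) := by
  have h1 : phiZetaRatio 1 = 1 / 2 := by simp [phiZetaRatio]
  refine MonotoneOn.Ioi_of_Ioo_of_Ioi one_pos
    (monotoneOn_phiZetaRatio_of_convex (convex_Ioo 0 1) Ioo_subset_Ioi_self right_notMem_Ioo)
    (monotoneOn_phiZetaRatio_of_convex (convex_Ioi 1) (Ioi_subset_Ioi zero_le_one)
      self_notMem_Ioi) (fun x hx => ?_) (fun x hx => ?_) <;> rw [h1]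
  · have := sub_one_mul_phiZetaRatio_sub_half_nonneg hx.1
    nlinarith [hx.2]
  · have := sub_one_mul_phiZetaRatio_sub_half_nonneg (zero_lt_one.trans hx)
    nlinarith [mem_Ioi.1 hx]

theorem zetaPhiRatio_antitone : AntitoneOn zetaPhiRatio (Set.Ioi (0 : ℝ)) := by
  intro x hx y hy hxy
  rw [zetaPhiRatio_eq_inv, zetaPhiRatio_eq_inv]
  exact inv_anti₀ (phiZetaRatio_pos hx) (monotoneOn_phiZetaRatio hx hy hxy)
end

section
/- If b > 0 satisfies b - 1 - log b ≤ 2E for some E > 0, then e^{-(1+2E)} ≤ b ≤ 1 + log 4 + 4E. -/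
open Real

theorem sublevel_bounds (E b : ℝ) (hE : 0 < E) (hb : 0 < b)
    (h : b - 1 - Real.log b ≤ 2 * E) :
    Real.exp (-(1 + 2 * E)) ≤ b ∧ b ≤ 1 + Real.log 4 + 4 * E := by
  constructor
  · have hlog : -(1 + 2 * E) ≤ Real.log b := by linarith
    calc Real.exp (-(1 + 2 * E)) ≤ Real.exp (Real.log b) := Real.exp_le_exp.mpr hlog
      _ = b := Real.exp_log hb
  · have h2 : Real.log (b / 2) ≤ b / 2 - 1 :=
      Real.log_le_sub_one_of_pos (by positivity)
    have h3 : Real.log (b / 2) = Real.log b - Real.log 2 :=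
      Real.log_div (ne_of_gt hb) two_ne_zero
    have h4 : Real.log 4 = 2 * Real.log 2 := by
      rw [show (4 : ℝ) = 2 ^ 2 by norm_num, Real.log_pow]; ring
    have h5 : (0:ℝ) < Real.log 2 := Real.log_pos (by norm_num)
    linarith
end

section
/- Let Ā be symmetric positive definite, α ≥ 0, β > 0, and let f(A) = α(ĀA + AĀ − 2A²) + β(Ā − A). Then for any symmetric positive semidefinite A, ⟨f(A), A − Ā⟩_F ≤ −β‖A − Ā‖_F². Consequently, any solution of Ȧ = f(A) with A(0) symmetric positive semidefinite satisfies ‖A(t) − Ā‖_F² ≤ e^{−2βt}‖A(0) − Ā‖_F². -/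
open Matrix

attribute [local instance] Matrix.normedAddCommGroup Matrix.normedSpace

/-!
Writing `E = A - Abar`, the vector field is `-(α (A E + E A) + β E)`, so for symmetric `A`, `Abar`
its Frobenius pairing with `E` is `-2α tr(Eᵀ A E) - β ‖E‖²`, and `tr(Eᵀ A E) ≥ 0` when `A ⪰ 0`.
Along a solution `d/dt ‖E‖² = 2 ⟨f(A), E⟩ ≤ -2β ‖E‖²`, and Grönwall's inequality gives the decay.
-/

section PrecisionFlow

variable {n : Type*} [Fintype n]

def precisionVectorField (Abar : Matrix n n ℝ) (α β : ℝ) (A : Matrix n n ℝ) : Matrix n n ℝ :=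
  α • (Abar * A + A * Abar - 2 • (A * A)) + β • (Abar - A)

variable {Abar A : Matrix n n ℝ} {α β : ℝ}

theorem precisionVectorField_eq_neg :
    precisionVectorField Abar α β A =
      -(α • (A * (A - Abar) + (A - Abar) * A) + β • (A - Abar)) := by
  have h : Abar * A + A * Abar - 2 • (A * A) = -(A * (A - Abar) + (A - Abar) * A) := by
    noncomm_ring
  rw [precisionVectorField, h, ← neg_sub A Abar, smul_neg, smul_neg, neg_add]

theorem trace_transpose_precisionVectorField_mul (hA : Aᵀ = A) (hAbar : Abarᵀ = Abar) :
    ((precisionVectorField Abar α β A)ᵀ * (A - Abar)).trace =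
      -(2 * α) * ((A - Abar)ᵀ * A * (A - Abar)).trace - β * ((A - Abar)ᵀ * (A - Abar)).trace := by
  rw [precisionVectorField_eq_neg]
  set E := A - Abar
  have hE : Eᵀ = E := by rw [transpose_sub, hA, hAbar]
  have hcycle : (E * E * A).trace = (E * A * E).trace := (trace_mul_cycle E A E).symm
  rw [← trace_transpose, transpose_mul, transpose_transpose, hE]
  simp only [mul_neg, mul_add, mul_smul_comm, trace_neg, trace_add, trace_smul, smul_eq_mul,
    ← Matrix.mul_assoc, hcycle]
  ring

theorem trace_transpose_precisionVectorField_mul_le (hA : A.PosSemidef) (hAbar : Abarᵀ = Abar)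
    (hα : 0 ≤ α) :
    ((precisionVectorField Abar α β A)ᵀ * (A - Abar)).trace ≤
      -β * ((A - Abar)ᵀ * (A - Abar)).trace := by
  have hAt : Aᵀ = A := hA.isHermitian.eq
  have key : 0 ≤ ((A - Abar)ᵀ * A * (A - Abar)).trace :=
    (hA.conjTranspose_mul_mul_same (A - Abar)).trace_nonneg
  rw [trace_transpose_precisionVectorField_mul hAt hAbar]
  linarith [mul_nonneg hα key]

end PrecisionFlow

theorem le_exp_mul_of_hasDerivAt_le_mul {g g' : ℝ → ℝ} {K a b : ℝ}
    (hg : ∀ s, HasDerivAt g (g' s) s) (hg' : ∀ s, g' s ≤ K * g s) (hab : a ≤ b) :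
    g b ≤ Real.exp (K * (b - a)) * g a := by
  have := le_gronwallBound_of_liminf_deriv_right_le (b := b) (δ := g a) (ε := 0)
    (fun s _ ↦ (hg s).continuousAt.continuousWithinAt)
    (fun s _ _ hr ↦ (hg s).hasDerivWithinAt.liminf_right_slope_le hr) le_rfl
    (fun s _ ↦ by simpa using hg' s) b ⟨hab, le_rfl⟩
  rwa [gronwallBound_ε0, mul_comm] at this

theorem HasDerivAt.trace_transpose_mul_self {m n : Type*} [Fintype m] [Fintype n]
    {E : ℝ → Matrix m n ℝ} {E' : Matrix m n ℝ} {t : ℝ} (hE : HasDerivAt E E' t) :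
    HasDerivAt (fun s ↦ ((E s)ᵀ * E s).trace) (2 * (E'ᵀ * E t).trace) t := by
  have hvec : ∀ p : n × m, HasDerivAt (fun s ↦ vec (E s) p) (vec E' p) t := fun p ↦
    hasDerivAt_pi.1 (hasDerivAt_pi.1 hE p.2) p.1
  simp only [← vec_dotProduct_vec, dotProduct]
  refine (HasDerivAt.fun_sum fun p _ ↦ (hvec p).mul (hvec p)).congr_deriv ?_
  rw [Finset.mul_sum]
  exact Finset.sum_congr rfl fun p _ ↦ by ring

theorem decay_of_precision_general (d : ℕ) (Abar : Matrix (Fin d) (Fin d) ℝ)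
    (hAbar : Abar.PosDef) (α β : ℝ) (hα : 0 ≤ α)
    (f : Matrix (Fin d) (Fin d) ℝ → Matrix (Fin d) (Fin d) ℝ)
    (hf : ∀ A, f A = α • (Abar * A + A * Abar - 2 • (A * A)) + β • (Abar - A)) :
    (∀ A : Matrix (Fin d) (Fin d) ℝ, A.PosSemidef →
      ((f A)ᵀ * (A - Abar)).trace ≤ -β * ((A - Abar)ᵀ * (A - Abar)).trace) ∧
    (∀ A : ℝ → Matrix (Fin d) (Fin d) ℝ,
      (∀ t, (A t).PosSemidef) →
      (∀ t, HasDerivAt A (f (A t)) t) →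
      ∀ t, 0 ≤ t →
        ((A t - Abar)ᵀ * (A t - Abar)).trace ≤
          Real.exp (-(2 * β) * t) * ((A 0 - Abar)ᵀ * (A 0 - Abar)).trace) := by
  obtain rfl : f = precisionVectorField Abar α β := funext hf
  have hAbar_symm : Abarᵀ = Abar := hAbar.isHermitian.eq
  have inner_le (A : Matrix (Fin d) (Fin d) ℝ) (hA : A.PosSemidef) :=
    trace_transpose_precisionVectorField_mul_le (β := β) hA hAbar_symm hα
  refine ⟨inner_le, fun A hA hA' t ht ↦ ?_⟩
  have hdist (s : ℝ) := ((hA' s).sub_const Abar).trace_transpose_mul_self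
  have hdecay := le_exp_mul_of_hasDerivAt_le_mul (K := -(2 * β)) hdist
    (fun s ↦ by linarith [inner_le (A s) (hA s)]) ht
  rwa [sub_zero] at hdecay

theorem decay_of_precision (d : ℕ) (Abar : Matrix (Fin d) (Fin d) ℝ)
    (hAbar : Abar.PosDef) (α β : ℝ) (hα : 0 ≤ α) (hβ : 0 < β)
    (f : Matrix (Fin d) (Fin d) ℝ → Matrix (Fin d) (Fin d) ℝ)
    (hf : ∀ A, f A = α • (Abar * A + A * Abar - 2 • (A * A)) + β • (Abar - A)) :
    (∀ A : Matrix (Fin d) (Fin d) ℝ, A.PosSemidef →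
      ((f A)ᵀ * (A - Abar)).trace ≤ -β * ((A - Abar)ᵀ * (A - Abar)).trace) ∧
    (∀ A : ℝ → Matrix (Fin d) (Fin d) ℝ,
      (∀ t, (A t).PosSemidef) →
      (∀ t, HasDerivAt A (f (A t)) t) →
      ∀ t, 0 ≤ t →
        ((A t - Abar)ᵀ * (A t - Abar)).trace ≤
          Real.exp (-(2 * β) * t) * ((A 0 - Abar)ᵀ * (A 0 - Abar)).trace) :=
  decay_of_precision_general d Abar hAbar α β hα f hf
end

section
/- Let ν > 0 and b₀ ∈ (0,1). Define 𝔟(t) = 1 + (1/b₀ − 1)e^{−νt} and b(t) = 1/𝔟(t). Then ∫₀ᵗ (1 − b(s)) ds ≤ −(1/ν) log(b₀ + (1 − b₀)e^{−νt}) ≤ −(1/ν) log b₀ for all t ≥ 0. -/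
/-!
With `g s = b₀ + (1 - b₀) e^{-νs}` one has `b = b₀ / g`, so `1 - b = -g' / (ν g)` and the
integral is exactly `-(1/ν) log g(t)` since `g 0 = 1`. The second inequality is `g ≥ b₀`.
-/

open Real

/-- In the theorem's notation, `expInterp ν b₀ s = b₀ * 𝔟 s`. -/
noncomputable def expInterp (ν b₀ s : ℝ) : ℝ := b₀ + (1 - b₀) * exp (-ν * s)

section expInterp

variable {ν b₀ : ℝ}

@[simp]
theorem expInterp_zero : expInterp ν b₀ 0 = 1 := by
  simp [expInterp]

theorem le_expInterp (hb₁ : b₀ ≤ 1) (s : ℝ) : b₀ ≤ expInterp ν b₀ s := by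
  unfold expInterp
  have := exp_pos (-ν * s)
  nlinarith

theorem expInterp_pos (hb₀ : 0 < b₀) (hb₁ : b₀ ≤ 1) (s : ℝ) : 0 < expInterp ν b₀ s :=
  hb₀.trans_le (le_expInterp hb₁ s)

theorem continuous_expInterp : Continuous (expInterp ν b₀) := by
  unfold expInterp
  fun_prop

theorem hasDerivAt_expInterp (s : ℝ) :
    HasDerivAt (expInterp ν b₀) ((1 - b₀) * (exp (-ν * s) * -ν)) s := by
  have hlin : HasDerivAt (fun u : ℝ => -ν * u) (-ν) s := by
    simpa using (hasDerivAt_id s).const_mul (-ν)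
  exact (hlin.exp.const_mul (1 - b₀)).const_add b₀

theorem hasDerivAt_neg_log_expInterp (hν : ν ≠ 0) {s : ℝ} (hs : expInterp ν b₀ s ≠ 0) :
    HasDerivAt (fun u => -(1 / ν) * log (expInterp ν b₀ u)) (1 - b₀ / expInterp ν b₀ s) s := by
  refine (((hasDerivAt_expInterp s).log hs).const_mul (-(1 / ν))).congr_deriv ?_
  field_simp
  rw [expInterp, neg_mul]
  ring

theorem integral_one_sub_div_expInterp (hν : ν ≠ 0) (hb₀ : 0 < b₀) (hb₁ : b₀ ≤ 1) (t : ℝ) :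
    ∫ s in (0 : ℝ)..t, (1 - b₀ / expInterp ν b₀ s) = -(1 / ν) * log (expInterp ν b₀ t) := by
  have hcont : Continuous fun s => 1 - b₀ / expInterp ν b₀ s :=
    continuous_const.sub <| continuous_const.div continuous_expInterp fun s =>
      (expInterp_pos hb₀ hb₁ s).ne'
  rw [intervalIntegral.integral_eq_sub_of_hasDerivAt
    (fun s _ => hasDerivAt_neg_log_expInterp hν (expInterp_pos hb₀ hb₁ s).ne')
    (hcont.intervalIntegrable 0 t)]
  simp

end expInterp

theorem integral_estimate (ν b₀ : ℝ) (hν : 0 < ν) (hb₀ : b₀ ∈ Set.Ioo (0 : ℝ) 1)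
    (𝔟 b : ℝ → ℝ)
    (h𝔟 : ∀ t, 𝔟 t = 1 + (1 / b₀ - 1) * Real.exp (-ν * t))
    (hb : ∀ t, b t = 1 / 𝔟 t) :
    ∀ t, 0 ≤ t →
      (∫ s in (0:ℝ)..t, (1 - b s)) ≤
          -(1 / ν) * Real.log (b₀ + (1 - b₀) * Real.exp (-ν * t)) ∧
      -(1 / ν) * Real.log (b₀ + (1 - b₀) * Real.exp (-ν * t)) ≤ -(1 / ν) * Real.log b₀ := by
  obtain ⟨hb₀, hb₁⟩ := hb₀
  have hb_eq : ∀ s, b s = b₀ / expInterp ν b₀ s := fun s => by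
    rw [hb, h𝔟, expInterp]
    field_simp
  intro t _
  change _ ≤ -(1 / ν) * log (expInterp ν b₀ t) ∧ -(1 / ν) * log (expInterp ν b₀ t) ≤ _
  simp only [hb_eq, integral_one_sub_div_expInterp hν.ne' hb₀ hb₁.le]
  refine ⟨le_rfl, mul_le_mul_of_nonpos_left ?_ (by simp [hν.le])⟩
  exact log_le_log hb₀ (le_expInterp hb₁.le t)
end

section
/- Let α_Γ > 0 and β ≥ 0. Define D_cov(b) = (1/2)∑_i (2α_Γ/b_i + β)(b_i − 1)² and H_cov(b) = (1/2)∑_i (b_i − 1 − log b_i) over tuples b ∈ (0,∞)^d. Then D_cov(b) ≥ 2α_Γ · H_cov(b) for all b; i.e., the global Polyak–Łojasiewicz inequality holds with constant 2α_Γ. -/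
open Real

theorem global_PL_inequality (d : ℕ) (αΓ β : ℝ) (hα : 0 < αΓ) (hβ : 0 ≤ β)
    (b : Fin d → ℝ) (hb : ∀ i, 0 < b i) :
    2 * αΓ * ((1 / 2 : ℝ) * ∑ i, (b i - 1 - Real.log (b i))) ≤
      (1 / 2 : ℝ) * ∑ i, (2 * αΓ / b i + β) * (b i - 1) ^ 2 := by
  have h1 : 2 * αΓ * ((1 / 2 : ℝ) * ∑ i, (b i - 1 - Real.log (b i)))
      = ∑ i, αΓ * (b i - 1 - Real.log (b i)) := by
    rw [show 2 * αΓ * ((1 / 2 : ℝ) * ∑ i, (b i - 1 - Real.log (b i)))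
        = αΓ * ∑ i, (b i - 1 - Real.log (b i)) by ring, Finset.mul_sum]
  rw [h1, Finset.mul_sum]
  apply Finset.sum_le_sum
  intro i _
  set y := b i with hy
  have hy0 : 0 < y := hb i
  have hlog : 1 - 1 / y ≤ Real.log y := by
    have h := Real.log_le_sub_one_of_pos (x := 1 / y) (by positivity)
    rw [Real.log_div one_ne_zero hy0.ne', Real.log_one] at h
    linarith
  have hinv : y * (1 / y) = 1 := by field_simp
  have hyL : y - 1 ≤ y * Real.log y := by nlinarith [mul_le_mul_of_nonneg_left hlog hy0.le]
  have key : (y - 1 - Real.log y) * y ≤ (y - 1) ^ 2 := by nlinarith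
  have h2 : αΓ * (y - 1 - Real.log y) ≤ αΓ / y * (y - 1) ^ 2 := by
    rw [div_mul_eq_mul_div, le_div_iff₀ hy0]
    calc αΓ * (y - 1 - Real.log y) * y = αΓ * ((y - 1 - Real.log y) * y) := by ring
      _ ≤ αΓ * (y - 1) ^ 2 := by exact mul_le_mul_of_nonneg_left key hα.le
  calc αΓ * (y - 1 - Real.log y) ≤ αΓ / y * (y - 1) ^ 2 := h2
    _ ≤ 1 / 2 * ((2 * αΓ / y + β) * (y - 1) ^ 2) := by
        rw [show 1 / 2 * ((2 * αΓ / y + β) * (y - 1) ^ 2)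
            = αΓ / y * (y - 1) ^ 2 + β / 2 * (y - 1) ^ 2 by ring]
        nlinarith [sq_nonneg (y - 1)]
end

section
/- Let the block Onsager operator K(u) = [[K₁₁, K₁₂],[K₂₁, K₂₂]] on X₁ × X₂ be symmetric positive definite with K₂₂ invertible, and suppose X₁ × {0} is invariant for the gradient flow u̇ = −K(u)DE(u), i.e., K₂₁(u₁,0)D₁E(u₁,0) + K₂₂(u₁,0)D₂E(u₁,0) = 0 for all u₁. Then the restricted flow satisfies u̇₁ = −K_red(u₁)D𝖤(u₁), where 𝖤(u₁) = E(u₁,0) and K_red(u₁) = K₁₁(u₁,0) − K₁₂(u₁,0)K₂₂(u₁,0)⁻¹K₂₁(u₁,0) is the Schur complement; moreover K_red(u₁) is symmetric positive semidefinite. -/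
open InnerProductSpace

variable {X₁ X₂ : Type*}
  [NormedAddCommGroup X₁] [InnerProductSpace ℝ X₁] [FiniteDimensional ℝ X₁]
  [NormedAddCommGroup X₂] [InnerProductSpace ℝ X₂] [FiniteDimensional ℝ X₂]

local notation "⟪" x ", " y "⟫" => inner (𝕜 := ℝ) x y

/-- Schur-complement reduction of a block Onsager gradient system to an
invariant subspace `X₁ × {0}`. The partial gradients `D₁E(u₁,0)` and `D₂E(u₁,0)`
are represented via `gradient`. -/
theorem schur_reduction_of_invariant_gradient_flow
    (K11 : X₁ → (X₁ →ₗ[ℝ] X₁)) (K12 : X₁ → (X₂ →ₗ[ℝ] X₁))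
    (K21 : X₁ → (X₁ →ₗ[ℝ] X₂)) (K22 : X₁ → (X₂ →ₗ[ℝ] X₂))
    (K22inv : X₁ → (X₂ →ₗ[ℝ] X₂))
    (hinv₁ : ∀ u₁, K22 u₁ ∘ₗ K22inv u₁ = LinearMap.id)
    (hinv₂ : ∀ u₁, K22inv u₁ ∘ₗ K22 u₁ = LinearMap.id)
    (hsym11 : ∀ u₁ (x y : X₁), ⟪K11 u₁ x, y⟫ = ⟪x, K11 u₁ y⟫)
    (hsym22 : ∀ u₁ (x y : X₂), ⟪K22 u₁ x, y⟫ = ⟪x, K22 u₁ y⟫)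
    (hsym12 : ∀ u₁ (x : X₁) (y : X₂), ⟪K12 u₁ y, x⟫ = ⟪y, K21 u₁ x⟫)
    (hpos : ∀ u₁ (x : X₁) (y : X₂), (x, y) ≠ (0, 0) →
      0 < ⟪x, K11 u₁ x⟫ + ⟪x, K12 u₁ y⟫ + ⟪y, K21 u₁ x⟫ + ⟪y, K22 u₁ y⟫)
    (E : X₁ × X₂ → ℝ) (hE : Differentiable ℝ E)
    (G1 : X₁ → X₁) (G2 : X₁ → X₂)
    (hG1 : ∀ u₁, G1 u₁ = gradient (fun v => E (v, 0)) u₁)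
    (hG2 : ∀ u₁, G2 u₁ = gradient (fun w => E (u₁, w)) 0)
    -- invariance of `X₁ × {0}` under the full gradient flow:
    (hinvariant : ∀ u₁, K21 u₁ (G1 u₁) + K22 u₁ (G2 u₁) = 0)
    (Kred : X₁ → (X₁ →ₗ[ℝ] X₁))
    (hKred : ∀ u₁, Kred u₁ = K11 u₁ - K12 u₁ ∘ₗ K22inv u₁ ∘ₗ K21 u₁)
    -- a trajectory of the full flow lying in the invariant subspace:
    (u : ℝ → X₁)
    (hu : ∀ t, HasDerivAt u (-(K11 (u t) (G1 (u t)) + K12 (u t) (G2 (u t)))) t) :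
    (∀ t, HasDerivAt u (-(Kred (u t)) (gradient (fun v => E (v, 0)) (u t))) t) ∧
    (∀ u₁ (x y : X₁), ⟪Kred u₁ x, y⟫ = ⟪x, Kred u₁ y⟫) ∧
    (∀ u₁ (x : X₁), 0 ≤ ⟪x, Kred u₁ x⟫) := by
  -- G2 in terms of G1
  have hG2eq : ∀ u₁, G2 u₁ = -(K22inv u₁ (K21 u₁ (G1 u₁))) := by
    intro u₁
    have h := hinvariant u₁
    have h1 : K22 u₁ (G2 u₁) = -(K21 u₁ (G1 u₁)) := by
      rw [eq_neg_iff_add_eq_zero, add_comm]; exact h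
    have h2 := LinearMap.congr_fun (hinv₂ u₁) (G2 u₁)
    simp only [LinearMap.comp_apply, LinearMap.id_apply] at h2
    rw [← h2, h1, map_neg]
  -- symmetry of K22inv
  have hsyminv : ∀ u₁ (x y : X₂), ⟪K22inv u₁ x, y⟫ = ⟪x, K22inv u₁ y⟫ := by
    intro u₁ x y
    have hy := LinearMap.congr_fun (hinv₁ u₁) y
    have hx := LinearMap.congr_fun (hinv₁ u₁) x
    simp only [LinearMap.comp_apply, LinearMap.id_apply] at hy hx
    calc ⟪K22inv u₁ x, y⟫ = ⟪K22inv u₁ x, K22 u₁ (K22inv u₁ y)⟫ := by rw [hy]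
      _ = ⟪K22 u₁ (K22inv u₁ x), K22inv u₁ y⟫ := by rw [hsym22]
      _ = ⟪x, K22inv u₁ y⟫ := by rw [hx]
  refine ⟨?_, ?_, ?_⟩
  · intro t
    have := hu t
    have heq : -(Kred (u t)) (gradient (fun v => E (v, 0)) (u t))
        = -(K11 (u t) (G1 (u t)) + K12 (u t) (G2 (u t))) := by
      rw [← hG1, hKred, hG2eq, map_neg]
      simp only [LinearMap.neg_apply, LinearMap.sub_apply, LinearMap.comp_apply]
      abel
    rw [heq]; exact this
  · intro u₁ x y
    rw [hKred]
    simp only [LinearMap.sub_apply, LinearMap.comp_apply, inner_sub_left, inner_sub_right]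
    rw [hsym11]
    congr 1
    calc ⟪K12 u₁ (K22inv u₁ (K21 u₁ x)), y⟫
        = ⟪K22inv u₁ (K21 u₁ x), K21 u₁ y⟫ := hsym12 u₁ y _
      _ = ⟪K21 u₁ x, K22inv u₁ (K21 u₁ y)⟫ := hsyminv u₁ _ _
      _ = ⟪K22inv u₁ (K21 u₁ y), K21 u₁ x⟫ := real_inner_comm _ _
      _ = ⟪K12 u₁ (K22inv u₁ (K21 u₁ y)), x⟫ := (hsym12 u₁ x _).symm
      _ = ⟪x, K12 u₁ (K22inv u₁ (K21 u₁ y))⟫ := real_inner_comm _ _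
  · intro u₁ x
    by_cases hx : x = 0
    · simp [hx]
    · set y : X₂ := -(K22inv u₁ (K21 u₁ x)) with hy
      have hK22y : K22 u₁ y = -(K21 u₁ x) := by
        have := LinearMap.congr_fun (hinv₁ u₁) (K21 u₁ x)
        simp only [LinearMap.comp_apply, LinearMap.id_apply] at this
        rw [hy, map_neg, this]
      have hne : (x, y) ≠ ((0 : X₁), (0 : X₂)) := by
        simp [Prod.ext_iff, hx]
      have hp := hpos u₁ x y hne
      have hterm : ⟪y, K22 u₁ y⟫ = -⟪y, K21 u₁ x⟫ := by
        rw [hK22y, inner_neg_right]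
      have hxy : ⟪x, K12 u₁ y⟫ = ⟪y, K21 u₁ x⟫ := by
        rw [real_inner_comm, hsym12]
      have hquad : ⟪x, K11 u₁ x⟫ + ⟪x, K12 u₁ y⟫ + ⟪y, K21 u₁ x⟫ + ⟪y, K22 u₁ y⟫
          = ⟪x, Kred u₁ x⟫ := by
        rw [hterm, hxy, hKred]
        simp only [LinearMap.sub_apply, LinearMap.comp_apply, inner_sub_right]
        have : ⟪x, K12 u₁ (K22inv u₁ (K21 u₁ x))⟫ = -⟪x, K12 u₁ y⟫ := by
          rw [hy]; simp [inner_neg_right]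
        rw [this, hxy]
        ring
      linarith [hp, hquad ▸ hp]
end

section
/- Let Γ be symmetric positive definite, n ∈ ℝ^d, α, β ≥ 0. Along solutions of the ODE ṁ = −(αI + βΣ(t))Γ⁻¹(m − n) where Σ(t) is symmetric with Γ^{-1/2}Σ(t)Γ^{-1/2} ≥ b_min I for all t with b_min > 0, the quantity H_m(m) = (1/2)(m−n)·Γ⁻¹(m−n) satisfies (d/dt)H_m(m(t)) ≤ −2(α·ν_min(Γ⁻¹) + β·b_min)·H_m(m(t)), and hence H_m(m(t)) ≤ e^{−2(α ν_min(Γ⁻¹)+β b_min)t} H_m(m(0)). -/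
open Matrix

namespace Matrix.PosSemidef

open scoped ComplexOrder

/-- The positive semidefinite square root of a positive semidefinite matrix
(the definition Mathlib had in December 2024, since removed). -/
noncomputable def sqrt {n 𝕜 : Type*} [Fintype n] [RCLike 𝕜] [DecidableEq n]
    {A : Matrix n n 𝕜} (hA : A.PosSemidef) : Matrix n n 𝕜 :=
  hA.1.eigenvectorUnitary.1 * diagonal ((↑) ∘ (√·) ∘ hA.1.eigenvalues) *
  (star hA.1.eigenvectorUnitary : Matrix n n 𝕜)

end Matrix.PosSemidef

/-!
Write `u = Γ⁻¹ (m - n)` and `Γ = S * S` with `S` the symmetric square root of `Γ`. Then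
`H (m t) = ½ (S u)·(S u)` and `d/dt H (m t) = -(α u·u + β u·Σ u)`. Both spectral hypotheses bound
the form `x ↦ x·(S⁻¹ M S⁻¹) x` from below, with `M = 1` for `ν_min` (as `Γ⁻¹ = S⁻¹ S⁻¹`) and
`M = Σ` for `b_min`; evaluated at `x = S u` they give `d/dt H ≤ -2 (α ν_min + β b_min) H`, and
Grönwall's inequality gives the exponential decay.
-/

section PosSemidefSqrt

open scoped ComplexOrder

variable {n 𝕜 : Type*} [Fintype n] [RCLike 𝕜] [DecidableEq n] {A : Matrix n n 𝕜}

theorem Matrix.PosSemidef.isHermitian_sqrt (hA : A.PosSemidef) : hA.sqrt.IsHermitian := by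
  unfold Matrix.PosSemidef.sqrt IsHermitian
  rw [conjTranspose_mul, conjTranspose_mul, diagonal_conjTranspose, ← star_eq_conjTranspose,
    ← star_eq_conjTranspose, star_star, mul_assoc]
  congr 3
  funext i
  simp

theorem Matrix.PosSemidef.sqrt_mul_self (hA : A.PosSemidef) : hA.sqrt * hA.sqrt = A := by
  set U : Matrix n n 𝕜 := hA.1.eigenvectorUnitary.1
  set D : Matrix n n 𝕜 := diagonal ((↑) ∘ (√·) ∘ hA.1.eigenvalues)
  have hU : star U * U = 1 := Unitary.coe_star_mul_self _
  have hDD : D * D = diagonal ((↑) ∘ hA.1.eigenvalues) := by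
    rw [diagonal_mul_diagonal]
    congr 1
    funext i
    simp only [Function.comp_apply]
    rw [← RCLike.ofReal_mul, Real.mul_self_sqrt (hA.eigenvalues_nonneg i)]
  calc hA.sqrt * hA.sqrt = U * (D * (star U * U) * D) * star U := by
        simp only [Matrix.PosSemidef.sqrt, U, D, mul_assoc]
    _ = A := by
        rw [hU, mul_one, hDD]
        conv_rhs => rw [hA.1.spectral_theorem, Unitary.conjStarAlgAut_apply]

end PosSemidefSqrt

theorem Matrix.IsSymm.dotProduct_mulVec_comm {ι R : Type*} [Fintype ι] [CommSemiring R]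
    {A : Matrix ι ι R} (hA : A.IsSymm) (v w : ι → R) : v ⬝ᵥ (A *ᵥ w) = w ⬝ᵥ (A *ᵥ v) := by
  rw [dotProduct_mulVec, ← mulVec_transpose, hA.eq, dotProduct_comm]

section Calculus

variable {ι : Type*} [Fintype ι] {f g : ℝ → ι → ℝ} {f' g' : ι → ℝ} {t : ℝ}

theorem HasDerivAt.dotProduct (hf : HasDerivAt f f' t) (hg : HasDerivAt g g' t) :
    HasDerivAt (fun s => f s ⬝ᵥ g s) (f' ⬝ᵥ g t + f t ⬝ᵥ g') t := by
  simp only [_root_.dotProduct, ← Finset.sum_add_distrib]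
  exact HasDerivAt.fun_sum fun i _ => (hasDerivAt_pi.1 hf i).mul (hasDerivAt_pi.1 hg i)

theorem HasDerivAt.const_mulVec (A : Matrix ι ι ℝ) (hf : HasDerivAt f f' t) :
    HasDerivAt (fun s => A *ᵥ f s) (A *ᵥ f') t :=
  hasDerivAt_pi.2 fun i => by
    simpa [mulVec] using (hasDerivAt_const t fun j => A i j).dotProduct hf

theorem HasDerivAt.half_dotProduct_mulVec_self {A : Matrix ι ι ℝ} (hA : A.IsSymm)
    (hf : HasDerivAt f f' t) :
    HasDerivAt (fun s => (1 / 2 : ℝ) * (f s ⬝ᵥ (A *ᵥ f s))) (f' ⬝ᵥ (A *ᵥ f t)) t := by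
  have h := (hf.dotProduct (hf.const_mulVec A)).const_mul (1 / 2 : ℝ)
  rwa [hA.dotProduct_mulVec_comm (f t) f', ← two_mul, ← mul_assoc, one_div_mul_cancel two_ne_zero,
    one_mul] at h

end Calculus

theorem le_exp_mul_of_hasDerivAt_le_mul_s19 {f f' : ℝ → ℝ} {K : ℝ}
    (hf : ∀ t, HasDerivAt f (f' t) t) (hbound : ∀ t, f' t ≤ K * f t) {t : ℝ} (ht : 0 ≤ t) :
    f t ≤ Real.exp (K * t) * f 0 := by
  have := le_gronwallBound_of_liminf_deriv_right_le (f' := f') (ε := 0) (b := t)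
    (fun s _ => (hf s).continuousAt.continuousWithinAt)
    (fun s _ _ hr => (hf s).hasDerivWithinAt.liminf_right_slope_le hr) le_rfl
    (fun s _ => by simpa using hbound s) t ⟨ht, le_rfl⟩
  rwa [gronwallBound_ε0, sub_zero, mul_comm] at this

theorem Matrix.mul_dotProduct_mulVec_le_of_forall_le_inv_conj {ι K : Type*} [Fintype ι]
    [DecidableEq ι] [CommRing K] [LE K] {R M : Matrix ι ι K} (hR : R.IsSymm)
    (hdet : IsUnit R.det) {c : K} (h : ∀ x, c * (x ⬝ᵥ x) ≤ x ⬝ᵥ ((R⁻¹ * M * R⁻¹) *ᵥ x))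
    (u : ι → K) : c * (u ⬝ᵥ ((R * R) *ᵥ u)) ≤ u ⬝ᵥ (M *ᵥ u) := by
  have hsq : (R *ᵥ u) ⬝ᵥ (R *ᵥ u) = u ⬝ᵥ ((R * R) *ᵥ u) := by
    rw [hR.dotProduct_mulVec_comm, mulVec_mulVec]
  have hconj : (R *ᵥ u) ⬝ᵥ ((R⁻¹ * M * R⁻¹) *ᵥ (R *ᵥ u)) = u ⬝ᵥ (M *ᵥ u) := by
    rw [mulVec_mulVec, mul_assoc, nonsing_inv_mul R hdet, mul_one, dotProduct_comm,
      hR.dotProduct_mulVec_comm, mulVec_mulVec, ← mul_assoc, mul_nonsing_inv R hdet, one_mul]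
  simpa only [hsq, hconj] using h (R *ᵥ u)

theorem mean_decay_general (d : ℕ) (Γ : Matrix (Fin d) (Fin d) ℝ) (hΓ : Γ.PosDef)
    (n : Fin d → ℝ) (α β : ℝ) (hα : 0 ≤ α) (hβ : 0 ≤ β)
    (Sg : ℝ → Matrix (Fin d) (Fin d) ℝ)
    (bmin : ℝ)
    (hSlow : ∀ t (x : Fin d → ℝ),
      bmin * (x ⬝ᵥ x) ≤
        x ⬝ᵥ (((hΓ.posSemidef.sqrt)⁻¹ * Sg t * (hΓ.posSemidef.sqrt)⁻¹) *ᵥ x))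
    (νmin : ℝ)
    (hνlow : ∀ x : Fin d → ℝ, νmin * (x ⬝ᵥ x) ≤ x ⬝ᵥ (Γ⁻¹ *ᵥ x))
    (m : ℝ → (Fin d → ℝ))
    (hm : ∀ t, HasDerivAt m
      (-(α • (Γ⁻¹ *ᵥ (m t - n)) + β • ((Sg t) *ᵥ (Γ⁻¹ *ᵥ (m t - n))))) t)
    (H : (Fin d → ℝ) → ℝ)
    (hH : ∀ v, H v = (1 / 2 : ℝ) * ((v - n) ⬝ᵥ (Γ⁻¹ *ᵥ (v - n)))) :
    (∀ t, 0 ≤ t →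
      deriv (fun s => H (m s)) t ≤ -(2 * (α * νmin + β * bmin)) * H (m t)) ∧
    (∀ t, 0 ≤ t →
      H (m t) ≤ Real.exp (-(2 * (α * νmin + β * bmin)) * t) * H (m 0)) := by
  set S := hΓ.posSemidef.sqrt
  have hSS : S * S = Γ := hΓ.posSemidef.sqrt_mul_self
  have hS : S.IsSymm := isHermitian_iff_isSymm.1 hΓ.posSemidef.isHermitian_sqrt
  have hΓdet : IsUnit Γ.det := isUnit_iff_ne_zero.2 hΓ.det_pos.ne'
  have hSdet : IsUnit S.det := isUnit_mul_self_iff.1 (by rwa [← det_mul, hSS])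
  have hΓinv : Γ⁻¹ = S⁻¹ * 1 * S⁻¹ := by rw [← hSS, Matrix.mul_inv_rev, mul_one]
  set u : ℝ → Fin d → ℝ := fun t => Γ⁻¹ *ᵥ (m t - n)
  have hHu : ∀ t, H (m t) = (1 / 2 : ℝ) * (u t ⬝ᵥ ((S * S) *ᵥ u t)) := fun t => by
    rw [hH, hSS, mulVec_mulVec, mul_nonsing_inv Γ hΓdet, one_mulVec,
      dotProduct_comm (u t)]
  have hderiv : ∀ t, HasDerivAt (fun s => H (m s))
      (-(α * (u t ⬝ᵥ (1 *ᵥ u t)) + β * (u t ⬝ᵥ (Sg t *ᵥ u t)))) t := fun t => by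
    have h := ((hm t).sub_const n).half_dotProduct_mulVec_self
      (isHermitian_iff_isSymm.1 hΓ.inv.isHermitian)
    simp only [← hH] at h
    convert h using 1
    simp only [u, one_mulVec, neg_dotProduct, add_dotProduct, smul_dotProduct, smul_eq_mul,
      dotProduct_comm (Γ⁻¹ *ᵥ (m t - n))]
  have hslope : ∀ t, -(α * (u t ⬝ᵥ (1 *ᵥ u t)) + β * (u t ⬝ᵥ (Sg t *ᵥ u t)))
      ≤ -(2 * (α * νmin + β * bmin)) * H (m t) := fun t => by
    have hν := mul_dotProduct_mulVec_le_of_forall_le_inv_conj hS hSdet (hΓinv ▸ hνlow) (u t)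
    have hb := mul_dotProduct_mulVec_le_of_forall_le_inv_conj hS hSdet (hSlow t) (u t)
    rw [hHu]
    linarith [mul_le_mul_of_nonneg_left hν hα, mul_le_mul_of_nonneg_left hb hβ]
  exact ⟨fun t _ => (hderiv t).deriv ▸ hslope t,
    fun t ht => le_exp_mul_of_hasDerivAt_le_mul_s19 hderiv hslope ht⟩

theorem mean_decay (d : ℕ) (Γ : Matrix (Fin d) (Fin d) ℝ) (hΓ : Γ.PosDef)
    (n : Fin d → ℝ) (α β : ℝ) (hα : 0 ≤ α) (hβ : 0 ≤ β)
    (Sg : ℝ → Matrix (Fin d) (Fin d) ℝ) (hScont : Continuous Sg)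
    (hSpos : ∀ t, (Sg t).PosDef)
    (bmin : ℝ) (hbmin : 0 < bmin)
    (hSlow : ∀ t (x : Fin d → ℝ),
      bmin * (x ⬝ᵥ x) ≤
        x ⬝ᵥ (((hΓ.posSemidef.sqrt)⁻¹ * Sg t * (hΓ.posSemidef.sqrt)⁻¹) *ᵥ x))
    (νmin : ℝ)
    (hνlow : ∀ x : Fin d → ℝ, νmin * (x ⬝ᵥ x) ≤ x ⬝ᵥ (Γ⁻¹ *ᵥ x))
    (hνeig : ∃ x : Fin d → ℝ, x ≠ 0 ∧ Γ⁻¹ *ᵥ x = νmin • x)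
    (m : ℝ → (Fin d → ℝ))
    (hm : ∀ t, HasDerivAt m
      (-(α • (Γ⁻¹ *ᵥ (m t - n)) + β • ((Sg t) *ᵥ (Γ⁻¹ *ᵥ (m t - n))))) t)
    (H : (Fin d → ℝ) → ℝ)
    (hH : ∀ v, H v = (1 / 2 : ℝ) * ((v - n) ⬝ᵥ (Γ⁻¹ *ᵥ (v - n)))) :
    (∀ t, 0 ≤ t →
      deriv (fun s => H (m s)) t ≤ -(2 * (α * νmin + β * bmin)) * H (m t)) ∧
    (∀ t, 0 ≤ t →
      H (m t) ≤ Real.exp (-(2 * (α * νmin + β * bmin)) * t) * H (m 0)) :=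
  mean_decay_general d Γ hΓ n α β hα hβ Sg bmin hSlow νmin hνlow m hm H hH
end
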